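/- arXiv:1707.01437 — 2 statements merged into one kernel-verified Lean document; each statement's English description precedes it below -/
import Mathlib

section
/- Suppose g : S¹ → SL(2,ℂ) is given by a finite Laurent matrix [[a₂*, b₂*],[c₂, d₂]] where a₂, b₂, c₂, d₂ are polynomials in z of degree ≤ n with n > 0, c₂(0) = 0, d₂(0) ≠ 0, and the determinant identity a₂* d₂ − b₂* c₂ = 1 holds as Laurent polynomials on ℂ∖{0}. Then the coefficient of z^n in a₂ is zero, i.e., deg a₂ < n. -/
/-! Multiplying the determinant identity by `T n` turns it into the polynomial identity
`ā₂ʳ d₂ - b̄₂ʳ c₂ = Xⁿ`, where `fʳ` is the reflection of `f` in degree `n`. Its constant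
coefficient is `conj (a₂ₙ) d₂(0) - conj (b₂ₙ) c₂(0) = 0`, and `c₂(0) = 0 ≠ d₂(0)`. -/

/-- For a polynomial `f(z) = Σ fₖ zᵏ` with complex coefficients, `f*` is the Laurent
polynomial `f*(z) = Σ (fₖ)* z^{-k}`, where `(·)*` is complex conjugation. -/
noncomputable def polyStar (f : Polynomial ℂ) : LaurentPolynomial ℂ :=
  ∑ k ∈ Finset.range (f.natDegree + 1),
    LaurentPolynomial.C (starRingEnd ℂ (f.coeff k)) * LaurentPolynomial.T (-(k : ℤ))

open Polynomial LaurentPolynomial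

theorem Polynomial.toLaurent_reflect {R : Type*} [CommSemiring R] {p : R[X]} {N : ℕ}
    (hp : p.natDegree ≤ N) : toLaurent (p.reflect N) = invert (toLaurent p) * T N := by
  have hsplit : p.reflect N = p.reverse * X ^ (N - p.natDegree) := by
    have h := reflect_mul p 1 le_rfl (natDegree_one.trans_le (Nat.zero_le (N - p.natDegree)))
    rwa [mul_one, Nat.add_sub_cancel' hp, reflect_one] at h
  rw [hsplit, map_mul, toLaurent_reverse, toLaurent_X_pow, mul_assoc, ← T_add, ← Nat.cast_add,
    Nat.add_sub_cancel' hp]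

theorem polyStar_eq_invert (f : ℂ[X]) :
    polyStar f = invert (toLaurent (f.map (starRingEnd ℂ))) := by
  rw [polyStar, as_sum_range' (f.map (starRingEnd ℂ)) (f.natDegree + 1)
    (Nat.lt_succ_of_le natDegree_map_le)]
  simp [map_sum, coeff_map]

theorem toLaurent_reflect_map_star {f : ℂ[X]} {N : ℕ} (hf : f.natDegree ≤ N) :
    toLaurent ((f.map (starRingEnd ℂ)).reflect N) = polyStar f * T N := by
  rw [toLaurent_reflect (natDegree_map_le.trans hf), polyStar_eq_invert]

theorem coeff_zero_reflect_map_star_mul (f g : ℂ[X]) (N : ℕ) :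
    ((f.map (starRingEnd ℂ)).reflect N * g).coeff 0 = starRingEnd ℂ (f.coeff N) * g.coeff 0 := by
  rw [mul_coeff_zero, coeff_reflect, revAt_le (Nat.zero_le N), Nat.sub_zero, coeff_map]

theorem stmt3_general (n : ℕ) (hn : 0 < n) (a₂ b₂ c₂ d₂ : Polynomial ℂ)
    (ha : a₂.natDegree ≤ n) (hb : b₂.natDegree ≤ n)
    (hc0 : c₂.coeff 0 = 0) (hd0 : d₂.coeff 0 ≠ 0)
    (hdet : polyStar a₂ * Polynomial.toLaurent d₂ - polyStar b₂ * Polynomial.toLaurent c₂ = 1) :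
    a₂.coeff n = 0 := by
  have hpoly : (a₂.map (starRingEnd ℂ)).reflect n * d₂ - (b₂.map (starRingEnd ℂ)).reflect n * c₂
      = X ^ n := by
    apply toLaurent_injective
    rw [map_sub, map_mul, map_mul, toLaurent_reflect_map_star ha, toLaurent_reflect_map_star hb,
      toLaurent_X_pow]
    linear_combination (T n : ℂ[T;T⁻¹]) * hdet
  have hcoeff := congrArg (coeff · 0) hpoly
  simp only [coeff_sub, coeff_zero_reflect_map_star_mul, hc0, mul_zero, sub_zero, coeff_X_pow,
    hn.ne, if_false] at hcoeff
  exact (map_eq_zero _).mp ((mul_eq_zero.mp hcoeff).resolve_right hd0)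

/-- If `g = [[a₂*, b₂*],[c₂, d₂]]` with `a₂, b₂, c₂, d₂` polynomials of degree
`≤ n`, `n > 0`, `c₂(0) = 0`, `d₂(0) ≠ 0` and `a₂* d₂ − b₂* c₂ = 1` as Laurent polynomials,
then the coefficient of `zⁿ` in `a₂` vanishes, i.e. `deg a₂ < n`. -/
theorem stmt3 (n : ℕ) (hn : 0 < n) (a₂ b₂ c₂ d₂ : Polynomial ℂ)
    (ha : a₂.natDegree ≤ n) (hb : b₂.natDegree ≤ n)
    (hc : c₂.natDegree ≤ n) (hd : d₂.natDegree ≤ n)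
    (hc0 : c₂.coeff 0 = 0) (hd0 : d₂.coeff 0 ≠ 0)
    (hdet : polyStar a₂ * Polynomial.toLaurent d₂ - polyStar b₂ * Polynomial.toLaurent c₂ = 1) :
    a₂.coeff n = 0 :=
  stmt3_general n hn a₂ b₂ c₂ d₂ ha hb hc0 hd0 hdet
end

section
/- Conversely, if c₂ and d₂ (bounded holomorphic functions on Δ, with the loop g₂ = [[a₂*, b₂*],[c₂, d₂]] SL(2,ℂ)-valued on S¹) have a common zero z₀ ∈ Δ, then the block Toeplitz operator A(g₂) has nontrivial kernel: the pair f = (d₂/(z−z₀), −c₂/(z−z₀)) lies in H² ⊕ H² and is annihilated by A(g₂). -/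
/-! Since `c₂ z₀ = d₂ z₀ = 0`, the quotients `d₂/(z - z₀)` and `c₂/(z - z₀)` are the slopes
`dslope d₂ z₀`, `dslope c₂ z₀`, which are bounded and holomorphic on the disk, so `f ∈ H² ⊕ H²`,
and `c₂ f₁ + d₂ f₂ = 0` by construction. On the circle the determinant condition
`a₂* d₂ - b₂* c₂ = 1` turns the first row `a₂* f₁ + b₂* f₂` into `1/(e^{iθ} - z₀)`, and rules out
`f = 0`. The nonnegative Fourier coefficients `J k` of `1/(e^{iθ} - z₀)` vanish: the identity
`e^{-ikθ} = e^{-i(k+1)θ} (e^{iθ} - z₀) + z₀ e^{-i(k+1)θ}` gives `J k = z₀ J (k+1)`, and a bounded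
sequence with this recursion is zero because `‖z₀‖ < 1`. -/

open Filter MeasureTheory Set Complex Topology

lemma norm_ofReal_mul_exp_mul_I {r : ℝ} (hr : 0 ≤ r) (θ : ℝ) : ‖(r : ℂ) * exp (θ * I)‖ = r := by
  rw [norm_mul, norm_exp_ofReal_mul_I, mul_one, Complex.norm_of_nonneg hr]

lemma ofReal_mul_exp_mul_I_ne {z₀ : ℂ} {r : ℝ} (hr : ‖z₀‖ < r) (θ : ℝ) :
    (r : ℂ) * exp (θ * I) ≠ z₀ := by
  rintro rfl
  rw [norm_ofReal_mul_exp_mul_I ((norm_nonneg _).trans hr.le)] at hr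
  exact hr.false

lemma one_sub_norm_le_norm_exp_mul_I_sub (z₀ : ℂ) (θ : ℝ) : 1 - ‖z₀‖ ≤ ‖exp (θ * I) - z₀‖ := by
  simpa only [norm_exp_ofReal_mul_I] using norm_sub_norm_le (exp (θ * I)) z₀

lemma exp_mul_I_sub_ne_zero {z₀ : ℂ} (hz₀ : ‖z₀‖ < 1) (θ : ℝ) : exp (θ * I) - z₀ ≠ 0 :=
  norm_pos_iff.mp <| (sub_pos.mpr hz₀).trans_le (one_sub_norm_le_norm_exp_mul_I_sub z₀ θ)

lemma eq_zero_of_eq_smul_succ {E : Type*} [NormedAddCommGroup E] [NormedSpace ℂ E]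
    {J : ℕ → E} {q : ℂ} (hq : ‖q‖ < 1) (hJ : ∀ n, J n = q • J (n + 1)) {C : ℝ}
    (hC : ∀ n, ‖J n‖ ≤ C) (k : ℕ) : J k = 0 := by
  have hpow : ∀ m, J k = q ^ m • J (k + m) := by
    intro m
    induction m with
    | zero => simp
    | succ m ih => rw [ih, hJ, smul_smul, ← pow_succ, add_assoc]
  have hlim : Tendsto (fun m : ℕ => ‖q‖ ^ m * C) atTop (𝓝 0) := by
    simpa using (tendsto_pow_atTop_nhds_zero_of_lt_one (norm_nonneg q) hq).mul_const C
  refine norm_le_zero_iff.mp <| ge_of_tendsto hlim <| Eventually.of_forall fun m => ?_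
  rw [hpow m, norm_smul, norm_pow]
  exact mul_le_mul_of_nonneg_left (hC _) (by positivity)

lemma integral_exp_neg_succ_mul_I (n : ℕ) :
    ∫ θ in (0 : ℝ)..2 * Real.pi, exp (-((n : ℝ) + 1) * θ * I) = 0 := by
  have hc : -((n : ℂ) + 1) * I ≠ 0 := mul_ne_zero (neg_ne_zero.mpr n.cast_add_one_ne_zero) I_ne_zero
  have hform (θ : ℝ) : (-((n : ℝ) + 1) * θ * I : ℂ) = -((n : ℂ) + 1) * I * θ := by push_cast; ring
  simp only [hform]
  rw [integral_exp_mul_complex hc]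
  have hperiod : -((n : ℂ) + 1) * I * ((2 * Real.pi : ℝ) : ℂ) =
      ((-(n + 1) : ℤ) : ℂ) * (2 * Real.pi * I) := by
    push_cast; ring
  rw [hperiod, exp_int_mul_two_pi_mul_I]
  simp

lemma integral_exp_neg_mul_I_div_exp_mul_I_sub {z₀ : ℂ} (hz₀ : ‖z₀‖ < 1) (k : ℕ) :
    ∫ θ in (0 : ℝ)..2 * Real.pi, exp (-(k : ℝ) * θ * I) / (exp (θ * I) - z₀) = 0 := by
  set g : ℕ → ℝ → ℂ := fun n θ => exp (-(n : ℝ) * θ * I) / (exp (θ * I) - z₀)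
  have hexp_cont (c : ℂ) : Continuous fun θ : ℝ => exp (c * θ * I) :=
    continuous_exp.comp ((continuous_const.mul continuous_ofReal).mul continuous_const)
  have hg_cont (n : ℕ) : Continuous (g n) :=
    (hexp_cont _).div ((continuous_exp.comp (continuous_ofReal.mul continuous_const)).sub
      continuous_const) (exp_mul_I_sub_ne_zero hz₀)
  have hsplit (n : ℕ) (θ : ℝ) : g n θ = exp (-((n : ℝ) + 1) * θ * I) + z₀ * g (n + 1) θ := by
    have hexp : exp (-((n : ℝ) + 1) * θ * I) * exp (θ * I) = exp (-(n : ℝ) * θ * I) := by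
      rw [← Complex.exp_add]; ring_nf
    have hne := exp_mul_I_sub_ne_zero hz₀ θ
    simp only [g, ← hexp]
    push_cast
    field_simp
    ring
  refine eq_zero_of_eq_smul_succ (J := fun n => ∫ θ in (0 : ℝ)..2 * Real.pi, g n θ)
    (C := (1 - ‖z₀‖)⁻¹ * (2 * Real.pi)) hz₀ (fun n => ?_) (fun n => ?_) k
  · simp only [hsplit n]
    rw [intervalIntegral.integral_add ((hexp_cont _).intervalIntegrable _ _)
      (((hg_cont _).intervalIntegrable _ _).const_mul z₀), integral_exp_neg_succ_mul_I,
      intervalIntegral.integral_const_mul, zero_add, smul_eq_mul]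
  · refine (intervalIntegral.norm_integral_le_of_norm_le_const fun θ _ => ?_).trans_eq
      (by rw [sub_zero, abs_of_pos Real.two_pi_pos])
    rw [norm_div, ← ofReal_neg, ← ofReal_mul, norm_exp_ofReal_mul_I, one_div]
    exact inv_anti₀ (sub_pos.mpr hz₀) (one_sub_norm_le_norm_exp_mul_I_sub z₀ θ)

lemma eq_zero_of_tendsto_radial {f : ℂ → ℂ} (hf : ∀ z : ℂ, ‖z‖ < 1 → f z = 0) {θ : ℝ} {L : ℂ}
    (h : Tendsto (fun r : ℝ => f (r * exp (θ * I))) (𝓝[<] 1) (𝓝 L)) : L = 0 := by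
  refine tendsto_nhds_unique h (tendsto_const_nhds.congr' ?_)
  filter_upwards [Ioo_mem_nhdsLT_of_mem (show (1 : ℝ) ∈ Ioc 0 1 by norm_num)] with r hr
  exact (hf _ (by rw [norm_ofReal_mul_exp_mul_I hr.1.le]; exact hr.2)).symm

lemma integral_norm_sq_ofReal_mul_exp_mul_I_le {f : ℂ → ℂ} {K r : ℝ}
    (hf : ContinuousOn f {z : ℂ | ‖z‖ < 1}) (hK : ∀ z : ℂ, ‖z‖ < 1 → ‖f z‖ ≤ K)
    (hr₀ : 0 ≤ r) (hr₁ : r < 1) :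
    ∫ θ in (0 : ℝ)..2 * Real.pi, ‖f (r * exp (θ * I))‖ ^ 2 ≤ 2 * Real.pi * K ^ 2 := by
  have hmem (θ : ℝ) : ‖(r : ℂ) * exp (θ * I)‖ < 1 := by
    rwa [norm_ofReal_mul_exp_mul_I hr₀]
  have hcont : Continuous fun θ : ℝ => ‖f (r * exp (θ * I))‖ ^ 2 :=
    (hf.comp_continuous (continuous_const.mul
      (continuous_exp.comp (continuous_ofReal.mul continuous_const))) hmem).norm.pow 2
  calc ∫ θ in (0 : ℝ)..2 * Real.pi, ‖f (r * exp (θ * I))‖ ^ 2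
      ≤ ∫ _ in (0 : ℝ)..2 * Real.pi, K ^ 2 :=
        intervalIntegral.integral_mono_on Real.two_pi_pos.le (hcont.intervalIntegrable _ _)
          intervalIntegrable_const fun θ _ => pow_le_pow_left₀ (norm_nonneg _) (hK _ (hmem θ)) 2
    _ = 2 * Real.pi * K ^ 2 := by simp

lemma dslope_eq_div_sub {g : ℂ → ℂ} {z₀ z : ℂ} (hg : g z₀ = 0) (hz : z ≠ z₀) :
    dslope g z₀ z = g z / (z - z₀) := by
  rw [dslope_of_ne _ hz, slope_def_field, hg, sub_zero]

lemma mul_dslope_eq_mul_dslope {c d : ℂ → ℂ} {z₀ : ℂ} (hc : c z₀ = 0) (hd : d z₀ = 0) (z : ℂ) :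
    c z * dslope d z₀ z = d z * dslope c z₀ z := by
  by_cases hz : z = z₀
  · simp [hz, hc, hd]
  · rw [dslope_eq_div_sub hd hz, dslope_eq_div_sub hc hz]
    ring

lemma exists_norm_dslope_le {U : Set ℂ} {g : ℂ → ℂ} {z₀ : ℂ} {M : ℝ} (hU : IsOpen U)
    (hz₀ : z₀ ∈ U) (hg : DifferentiableOn ℂ g U) (hM : ∀ z ∈ U, ‖g z‖ ≤ M) :
    ∃ K, ∀ z ∈ U, ‖dslope g z₀ z‖ ≤ K := by
  obtain ⟨ρ, hρ, hball⟩ := Metric.nhds_basis_closedBall.mem_iff.1 (hU.mem_nhds hz₀)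
  obtain ⟨C, hC⟩ := (isCompact_closedBall z₀ ρ).exists_bound_of_continuousOn
    (((Complex.differentiableOn_dslope (hU.mem_nhds hz₀)).2 hg).continuousOn.mono hball)
  refine ⟨max C (2 * M / ρ), fun z hz => ?_⟩
  by_cases hzρ : z ∈ Metric.closedBall z₀ ρ
  · exact (hC z hzρ).trans (le_max_left _ _)
  rw [Metric.mem_closedBall, not_le, dist_eq_norm] at hzρ
  have hne : z ≠ z₀ := by rintro rfl; simp [hρ.not_gt] at hzρ
  have hgz : ‖g z - g z₀‖ ≤ 2 * M := (norm_sub_le _ _).trans (by linarith [hM z hz, hM z₀ hz₀])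
  rw [dslope_of_ne _ hne, slope_def_field, norm_div]
  exact le_max_of_le_right (div_le_div₀ ((norm_nonneg _).trans hgz) hgz hρ hzρ.le)

lemma tendsto_dslope_radial {g : ℂ → ℂ} {z₀ : ℂ} (hz₀ : ‖z₀‖ < 1) {θ : ℝ} {L : ℂ}
    (h : Tendsto (fun r : ℝ => g (r * exp (θ * I))) (𝓝[<] 1) (𝓝 L)) :
    Tendsto (fun r : ℝ => dslope g z₀ (r * exp (θ * I))) (𝓝[<] 1)
      (𝓝 ((L - g z₀) / (exp (θ * I) - z₀))) := by
  have hden : Tendsto (fun r : ℝ => (r : ℂ) * exp (θ * I) - z₀) (𝓝[<] 1)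
      (𝓝 (exp (θ * I) - z₀)) := by
    refine (Continuous.tendsto' ?_ 1 _ (by simp)).mono_left nhdsWithin_le_nhds
    exact (continuous_ofReal.mul continuous_const).sub continuous_const
  refine ((h.sub_const (g z₀)).div hden (exp_mul_I_sub_ne_zero hz₀ θ)).congr' ?_
  filter_upwards [Ioo_mem_nhdsLT_of_mem ⟨hz₀, le_rfl⟩] with r hr
  rw [dslope_of_ne _ (ofReal_mul_exp_mul_I_ne hr.1 θ), slope_def_field]
  rfl

theorem stmt14_general (a₂ b₂ c₂ d₂ : ℂ → ℂ)
    (holo : ∀ h ∈ ({a₂, b₂, c₂, d₂} : Set (ℂ → ℂ)),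
      DifferentiableOn ℂ h {z : ℂ | ‖z‖ < 1})
    (hbdd : ∃ M : ℝ, ∀ h ∈ ({a₂, b₂, c₂, d₂} : Set (ℂ → ℂ)),
      ∀ z : ℂ, ‖z‖ < 1 → ‖h z‖ ≤ M)
    -- boundary values (a.e. radial limits) of a₂, b₂, c₂, d₂:
    (A B C D : ℝ → ℂ)
    (hC : ∀ᵐ θ : ℝ, Tendsto (fun r : ℝ => c₂ ((r : ℂ) * Complex.exp (θ * Complex.I)))
      (nhdsWithin 1 (Set.Iio 1)) (nhds (C θ)))
    (hD : ∀ᵐ θ : ℝ, Tendsto (fun r : ℝ => d₂ ((r : ℂ) * Complex.exp (θ * Complex.I)))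
      (nhdsWithin 1 (Set.Iio 1)) (nhds (D θ)))
    -- the loop is SL(2,ℂ)-valued a.e. on the circle:
    (hdet : ∀ᵐ θ : ℝ, starRingEnd ℂ (A θ) * D θ - starRingEnd ℂ (B θ) * C θ = 1)
    -- a common zero of c₂ and d₂ in the open disk:
    (z₀ : ℂ) (hz₀ : ‖z₀‖ < 1) (hcz : c₂ z₀ = 0) (hdz : d₂ z₀ = 0) :
    ∃ f₁ f₂ : ℂ → ℂ,
      DifferentiableOn ℂ f₁ {z : ℂ | ‖z‖ < 1} ∧
      DifferentiableOn ℂ f₂ {z : ℂ | ‖z‖ < 1} ∧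
      -- f = (d₂/(z−z₀), −c₂/(z−z₀)):
      (∀ z : ℂ, ‖z‖ < 1 → z ≠ z₀ →
        f₁ z = d₂ z / (z - z₀) ∧ f₂ z = -c₂ z / (z - z₀)) ∧
      -- f ∈ H² ⊕ H²:
      (∃ M : ℝ, ∀ r : ℝ, 0 ≤ r → r < 1 →
        (∫ θ in (0 : ℝ)..(2 * Real.pi),
          ‖f₁ ((r : ℂ) * Complex.exp (θ * Complex.I))‖ ^ 2) ≤ M ∧
        (∫ θ in (0 : ℝ)..(2 * Real.pi),
          ‖f₂ ((r : ℂ) * Complex.exp (θ * Complex.I))‖ ^ 2) ≤ M) ∧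
      -- f is nonzero:
      (¬ ∀ z : ℂ, ‖z‖ < 1 → f₁ z = 0 ∧ f₂ z = 0) ∧
      -- the second row of g₂ f vanishes identically:
      (∀ z : ℂ, ‖z‖ < 1 → c₂ z * f₁ z + d₂ z * f₂ z = 0) ∧
      -- P₊ of the first row of g₂ f vanishes:
      ∃ G₁ G₂ : ℝ → ℂ,
        (∀ᵐ θ : ℝ, Tendsto (fun r : ℝ => f₁ ((r : ℂ) * Complex.exp (θ * Complex.I)))
          (nhdsWithin 1 (Set.Iio 1)) (nhds (G₁ θ))) ∧
        (∀ᵐ θ : ℝ, Tendsto (fun r : ℝ => f₂ ((r : ℂ) * Complex.exp (θ * Complex.I)))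
          (nhdsWithin 1 (Set.Iio 1)) (nhds (G₂ θ))) ∧
        ∀ k : ℕ,
          (∫ θ in (0 : ℝ)..(2 * Real.pi),
            (starRingEnd ℂ (A θ) * G₁ θ + starRingEnd ℂ (B θ) * G₂ θ) *
              Complex.exp (-(k : ℝ) * θ * Complex.I)) = 0 := by
  obtain ⟨M, hM⟩ := hbdd
  have hU : IsOpen {z : ℂ | ‖z‖ < 1} := isOpen_lt continuous_norm continuous_const
  have hdslope {g : ℂ → ℂ} (hg : DifferentiableOn ℂ g {z : ℂ | ‖z‖ < 1}) :
      DifferentiableOn ℂ (dslope g z₀) {z : ℂ | ‖z‖ < 1} :=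
    (Complex.differentiableOn_dslope (hU.mem_nhds hz₀)).2 hg
  have hc := holo c₂ (by simp)
  have hd := holo d₂ (by simp)
  obtain ⟨K₁, hK₁⟩ := exists_norm_dslope_le hU hz₀ hd (hM d₂ (by simp))
  obtain ⟨K₂, hK₂⟩ := exists_norm_dslope_le hU hz₀ hc (hM c₂ (by simp))
  have hlim₁ : ∀ᵐ θ : ℝ, Tendsto (fun r : ℝ => dslope d₂ z₀ (r * exp (θ * I))) (𝓝[<] 1)
      (𝓝 (D θ / (exp (θ * I) - z₀))) := by
    filter_upwards [hD] with θ hθ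
    simpa [hdz] using tendsto_dslope_radial hz₀ hθ
  have hlim₂ : ∀ᵐ θ : ℝ, Tendsto (fun r : ℝ => (-dslope c₂ z₀) (r * exp (θ * I))) (𝓝[<] 1)
      (𝓝 (-C θ / (exp (θ * I) - z₀))) := by
    filter_upwards [hC] with θ hθ
    simpa [hcz, neg_div] using (tendsto_dslope_radial hz₀ hθ).neg
  refine ⟨dslope d₂ z₀, -dslope c₂ z₀, hdslope hd, (hdslope hc).neg,
    fun z _ hz => ⟨dslope_eq_div_sub hdz hz, by simp [dslope_eq_div_sub hcz hz, neg_div]⟩,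
    ⟨2 * Real.pi * max K₁ K₂ ^ 2, fun r hr₀ hr₁ => ⟨?_, ?_⟩⟩, fun hzero => ?_,
    fun z _ => by simp [mul_dslope_eq_mul_dslope hcz hdz z],
    _, _, hlim₁, hlim₂, fun k => ?_⟩
  · exact integral_norm_sq_ofReal_mul_exp_mul_I_le (hdslope hd).continuousOn
      (fun z hz => (hK₁ z hz).trans (le_max_left _ _)) hr₀ hr₁
  · exact integral_norm_sq_ofReal_mul_exp_mul_I_le (hdslope hc).neg.continuousOn
      (fun z hz => by simpa using (hK₂ z hz).trans (le_max_right _ _)) hr₀ hr₁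
  · obtain ⟨θ, hθdet, hθ₁, hθ₂⟩ := (hdet.and (hlim₁.and hlim₂)).exists
    have hDθ := eq_zero_of_tendsto_radial (fun z hz => (hzero z hz).1) hθ₁
    have hCθ := eq_zero_of_tendsto_radial (fun z hz => (hzero z hz).2) hθ₂
    simp [exp_mul_I_sub_ne_zero hz₀ θ] at hDθ hCθ
    simp [hDθ, hCθ] at hθdet
  · rw [← integral_exp_neg_mul_I_div_exp_mul_I_sub hz₀ k]
    refine intervalIntegral.integral_congr_ae (hdet.mono fun θ hθ _ => ?_)
    linear_combination (exp (-(k : ℝ) * θ * I) / (exp (θ * I) - z₀)) * hθ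

/-- Conversely, let `g₂ = [[a₂*, b₂*],[c₂, d₂]]` with `a₂, b₂, c₂, d₂` bounded
holomorphic on the unit disk and the boundary loop `SL(2,ℂ)`-valued a.e. on `S¹`.  If `c₂`
and `d₂` have a common zero `z₀ ∈ Δ`, then the block Toeplitz operator `A(g₂)` has
nontrivial kernel: the pair `f = (d₂/(z−z₀), −c₂/(z−z₀))` lies in `H² ⊕ H²`, is nonzero,
and is annihilated by `A(g₂)` (the second row `c₂ f₁ + d₂ f₂` vanishes identically and all
nonnegative Fourier coefficients of the boundary values of the first row
`a₂* f₁ + b₂* f₂` vanish). -/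
theorem stmt14 (a₂ b₂ c₂ d₂ : ℂ → ℂ)
    (holo : ∀ h ∈ ({a₂, b₂, c₂, d₂} : Set (ℂ → ℂ)),
      DifferentiableOn ℂ h {z : ℂ | ‖z‖ < 1})
    (hbdd : ∃ M : ℝ, ∀ h ∈ ({a₂, b₂, c₂, d₂} : Set (ℂ → ℂ)),
      ∀ z : ℂ, ‖z‖ < 1 → ‖h z‖ ≤ M)
    -- boundary values (a.e. radial limits) of a₂, b₂, c₂, d₂:
    (A B C D : ℝ → ℂ)
    (hA : ∀ᵐ θ : ℝ, Tendsto (fun r : ℝ => a₂ ((r : ℂ) * Complex.exp (θ * Complex.I)))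
      (nhdsWithin 1 (Set.Iio 1)) (nhds (A θ)))
    (hB : ∀ᵐ θ : ℝ, Tendsto (fun r : ℝ => b₂ ((r : ℂ) * Complex.exp (θ * Complex.I)))
      (nhdsWithin 1 (Set.Iio 1)) (nhds (B θ)))
    (hC : ∀ᵐ θ : ℝ, Tendsto (fun r : ℝ => c₂ ((r : ℂ) * Complex.exp (θ * Complex.I)))
      (nhdsWithin 1 (Set.Iio 1)) (nhds (C θ)))
    (hD : ∀ᵐ θ : ℝ, Tendsto (fun r : ℝ => d₂ ((r : ℂ) * Complex.exp (θ * Complex.I)))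
      (nhdsWithin 1 (Set.Iio 1)) (nhds (D θ)))
    -- the loop is SL(2,ℂ)-valued a.e. on the circle:
    (hdet : ∀ᵐ θ : ℝ, starRingEnd ℂ (A θ) * D θ - starRingEnd ℂ (B θ) * C θ = 1)
    -- a common zero of c₂ and d₂ in the open disk:
    (z₀ : ℂ) (hz₀ : ‖z₀‖ < 1) (hcz : c₂ z₀ = 0) (hdz : d₂ z₀ = 0) :
    ∃ f₁ f₂ : ℂ → ℂ,
      DifferentiableOn ℂ f₁ {z : ℂ | ‖z‖ < 1} ∧
      DifferentiableOn ℂ f₂ {z : ℂ | ‖z‖ < 1} ∧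
      -- f = (d₂/(z−z₀), −c₂/(z−z₀)):
      (∀ z : ℂ, ‖z‖ < 1 → z ≠ z₀ →
        f₁ z = d₂ z / (z - z₀) ∧ f₂ z = -c₂ z / (z - z₀)) ∧
      -- f ∈ H² ⊕ H²:
      (∃ M : ℝ, ∀ r : ℝ, 0 ≤ r → r < 1 →
        (∫ θ in (0 : ℝ)..(2 * Real.pi),
          ‖f₁ ((r : ℂ) * Complex.exp (θ * Complex.I))‖ ^ 2) ≤ M ∧
        (∫ θ in (0 : ℝ)..(2 * Real.pi),
          ‖f₂ ((r : ℂ) * Complex.exp (θ * Complex.I))‖ ^ 2) ≤ M) ∧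
      -- f is nonzero:
      (¬ ∀ z : ℂ, ‖z‖ < 1 → f₁ z = 0 ∧ f₂ z = 0) ∧
      -- the second row of g₂ f vanishes identically:
      (∀ z : ℂ, ‖z‖ < 1 → c₂ z * f₁ z + d₂ z * f₂ z = 0) ∧
      -- P₊ of the first row of g₂ f vanishes:
      ∃ G₁ G₂ : ℝ → ℂ,
        (∀ᵐ θ : ℝ, Tendsto (fun r : ℝ => f₁ ((r : ℂ) * Complex.exp (θ * Complex.I)))
          (nhdsWithin 1 (Set.Iio 1)) (nhds (G₁ θ))) ∧
        (∀ᵐ θ : ℝ, Tendsto (fun r : ℝ => f₂ ((r : ℂ) * Complex.exp (θ * Complex.I)))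
          (nhdsWithin 1 (Set.Iio 1)) (nhds (G₂ θ))) ∧
        ∀ k : ℕ,
          (∫ θ in (0 : ℝ)..(2 * Real.pi),
            (starRingEnd ℂ (A θ) * G₁ θ + starRingEnd ℂ (B θ) * G₂ θ) *
              Complex.exp (-(k : ℝ) * θ * Complex.I)) = 0 :=
  stmt14_general a₂ b₂ c₂ d₂ holo hbdd A B C D hC hD hdet z₀ hz₀ hcz hdz
end
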